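/- For every natural number n ≥ 1, the Stern polynomials B_n(t) and B_{n+1}(t) are coprime in ℤ[t], i.e. gcd(B_n(t), B_{n+1}(t)) = 1. -/

import Mathlib

open Polynomial

/-- The Stern polynomials: `B 0 = 0`, `B 1 = 1`, `B (2n) = t * B n`,
`B (2n+1) = B n + B (n+1)`. -/
noncomputable def stern : ℕ → Polynomial ℤ
  | 0 => 0
  | 1 => 1
  | n + 2 =>
    if _h : n % 2 = 0 then
      X * stern (n / 2 + 1)
    else
      stern (n / 2 + 1) + stern (n / 2 + 2)
  decreasing_by all_goals omega

/-! The stronger Bézout statement `IsCoprime (stern n) (stern (n + 1))` passes from `n` to `2n` and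
`2n + 1`. Indeed `stern (2n + 1) = stern n + stern (n + 1)` is coprime to each of `stern n` and
`stern (n + 1)` once these two are coprime to each other, and it is coprime to `X` because its constant
term is `1`; the factor `X` in `stern (2n) = X * stern n` and `stern (2n + 2) = X * stern (n + 1)` is
therefore harmless. -/

@[simp]
lemma stern_zero : stern 0 = 0 := by rw [stern]

@[simp]
lemma stern_one : stern 1 = 1 := by rw [stern]

lemma stern_two_mul (n : ℕ) : stern (2 * n) = X * stern n := by
  rcases n with _ | n
  · simp
  · rw [show 2 * (n + 1) = 2 * n + 2 by ring, stern, dif_pos (by omega)]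
    congr 2
    omega

lemma stern_two_mul_add_one (n : ℕ) : stern (2 * n + 1) = stern n + stern (n + 1) := by
  rcases n with _ | n
  · simp
  · rw [show 2 * (n + 1) + 1 = (2 * n + 1) + 2 by ring, stern, dif_neg (by omega)]
    congr 2 <;> omega

lemma stern_coeff_zero (n : ℕ) : (stern n).coeff 0 = (n % 2 : ℕ) := by
  induction n using stern.induct with
  | case1 => simp
  | case2 => simp
  | case3 n hn => rw [stern, dif_pos hn, coeff_X_mul_zero]; omega
  | case4 n hn ih₁ ih₂ => rw [stern, dif_neg hn, coeff_add, ih₁, ih₂]; omega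

lemma Polynomial.isCoprime_X_of_isUnit_coeff_zero {R : Type*} [CommRing R] {p : R[X]}
    (hp : IsUnit (p.coeff 0)) : IsCoprime X p := by
  obtain ⟨q, hq⟩ := X_dvd_sub_C (p := p)
  rw [show p = C (p.coeff 0) * 1 + X * q by rw [← hq]; ring]
  exact ((isCoprime_mul_unit_left_right (hp.map C) X 1).mpr isCoprime_one_right).add_mul_left_right q

lemma isCoprime_X_stern_two_mul_add_one (n : ℕ) : IsCoprime X (stern (2 * n + 1)) :=
  isCoprime_X_of_isUnit_coeff_zero (by simp [stern_coeff_zero])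

lemma isCoprime_stern_stern_succ (n : ℕ) : IsCoprime (stern n) (stern (n + 1)) := by
  induction n using Nat.evenOddRec with
  | h0 => simpa using isCoprime_one_right
  | h_even n ih =>
    have h : IsCoprime (stern n) (stern (2 * n + 1)) := by
      rw [stern_two_mul_add_one, add_comm]
      simpa only [mul_one] using ih.add_mul_left_right 1
    rw [stern_two_mul]
    exact (isCoprime_X_stern_two_mul_add_one n).mul_left h
  | h_odd n ih =>
    have h : IsCoprime (stern (2 * n + 1)) (stern (n + 1)) := by
      rw [stern_two_mul_add_one]
      simpa only [mul_one] using ih.add_mul_left_left 1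
    rw [show 2 * n + 1 + 1 = 2 * (n + 1) by ring, stern_two_mul]
    exact (isCoprime_X_stern_two_mul_add_one n).symm.mul_right h

theorem stern_consecutive_coprime_general (n : ℕ) (d : Polynomial ℤ)
    (hd1 : d ∣ stern n) (hd2 : d ∣ stern (n + 1)) : IsUnit d :=
  (isCoprime_stern_stern_succ n).isUnit_of_dvd' hd1 hd2

theorem stern_consecutive_coprime (n : ℕ) (hn : 1 ≤ n) (d : Polynomial ℤ)
    (hd1 : d ∣ stern n) (hd2 : d ∣ stern (n + 1)) : IsUnit d :=
  stern_consecutive_coprime_general n d hd1 hd2
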